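/- Let m and o be positive natural numbers, w_c ∈ ℝ^m, c > 0 and z_sup > 0. Then there exists γ ∈ ℝ^o with γ ≠ 0 such that for every probability space (Ω, F, μ) and all measurable Z_c : Ω → ℝ^m, Z_e : Ω → ℝ^o, η : Ω → Bool satisfying |⟨w_c, Z_c(ω)⟩| ≥ c and ‖Z_e(ω)‖ ≤ z_sup for all ω, the classifier ĝ_γ(ω) = decide(⟨w_c, Z_c(ω)⟩ + ⟨γ, Z_e(ω)⟩ ≥ 0), which places nonzero weight on the spurious feature Z_e, achieves risk μ{ω : Y(ω) ≠ ĝ_γ(ω)} = μ{ω : η(ω) = true} for the label Y(ω) = (decide(⟨w_c, Z_c(ω)⟩ ≥ 0)) XOR η(ω); i.e., it is Bayes optimal (its error equals the label noise rate) in every such environment. -/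

import Mathlib

/-!
The spurious term `⟪γ, Z_e⟫` is bounded by `‖γ‖ z_sup`; taking `‖γ‖ = c / (2 z_sup)` makes it
smaller than the margin `c` of the invariant score `⟪w_c, Z_c⟫`, so adding it never changes the
sign of the score. The classifier then agrees pointwise with the noiseless label
`decide (0 ≤ ⟪w_c, Z_c⟫)`, and it errs exactly where the noise `η` flips that label.
-/

open scoped RealInnerProductSpace
open MeasureTheory

theorem nonneg_add_iff_of_abs_lt_le_abs {a b c : ℝ} (ha : c ≤ |a|) (hb : |b| < c) :
    0 ≤ a + b ↔ 0 ≤ a := by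
  obtain ⟨hb₁, hb₂⟩ := abs_lt.mp hb
  rcases abs_cases a with ⟨ha', _⟩ | ⟨ha', _⟩ <;> constructor <;> intro <;> linarith

theorem Bool.xor_ne_self_iff (p e : Bool) : xor p e ≠ p ↔ e = true := by
  cases p <;> cases e <;> decide

theorem setOf_xor_sign_ne_sign_eq {Ω : Type*} {s t : Ω → ℝ} (η : Ω → Bool)
    (hst : ∀ ω, 0 ≤ t ω ↔ 0 ≤ s ω) :
    {ω | xor (decide (0 ≤ s ω)) (η ω) ≠ decide (0 ≤ t ω)} = {ω | η ω = true} := by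
  ext ω
  simp only [Set.mem_ofPred_eq, decide_eq_decide.mpr (hst ω), Bool.xor_ne_self_iff]

theorem abs_inner_lt_of_norm_mul_lt {E : Type*} [NormedAddCommGroup E] [InnerProductSpace ℝ E]
    {γ z : E} {r c : ℝ} (hz : ‖z‖ ≤ r) (hγ : ‖γ‖ * r < c) : |⟪γ, z⟫| < c :=
  calc |⟪γ, z⟫| ≤ ‖γ‖ * ‖z‖ := abs_real_inner_le_norm γ z
    _ ≤ ‖γ‖ * r := by gcongr
    _ < c := hγ

theorem exists_spurious_bayes_optimal_general (m o : ℕ) (ho : 0 < o)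
    (w_c : EuclideanSpace ℝ (Fin m)) (c z_sup : ℝ) (hc : 0 < c) (hz : 0 < z_sup) :
    ∃ γ : EuclideanSpace ℝ (Fin o), γ ≠ 0 ∧
      ∀ (Ω : Type) (_ : MeasurableSpace Ω) (μ : Measure Ω), IsProbabilityMeasure μ →
        ∀ (Z_c : Ω → EuclideanSpace ℝ (Fin m)) (Z_e : Ω → EuclideanSpace ℝ (Fin o))
          (η : Ω → Bool), Measurable Z_c → Measurable Z_e → Measurable η →
          (∀ ω, |⟪w_c, Z_c ω⟫| ≥ c) → (∀ ω, ‖Z_e ω‖ ≤ z_sup) →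
          μ {ω | xor (decide ((0:ℝ) ≤ ⟪w_c, Z_c ω⟫)) (η ω)
                  ≠ decide ((0:ℝ) ≤ ⟪w_c, Z_c ω⟫ + ⟪γ, Z_e ω⟫)}
            = μ {ω | η ω = true} := by
  have : Nonempty (Fin o) := ⟨⟨0, ho⟩⟩
  obtain ⟨γ, hγ⟩ := exists_norm_eq (EuclideanSpace ℝ (Fin o)) (c := c / (2 * z_sup)) (by positivity)
  have hγ_pos : 0 < ‖γ‖ := hγ ▸ by positivity
  have hγ_small : ‖γ‖ * z_sup < c := by
    rw [hγ, div_mul_eq_mul_div, mul_div_mul_right _ _ hz.ne']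
    linarith
  refine ⟨γ, norm_pos_iff.mp hγ_pos, fun Ω _ μ _ Z_c Z_e η _ _ _ hmargin hbound => ?_⟩
  rw [setOf_xor_sign_ne_sign_eq η fun ω => nonneg_add_iff_of_abs_lt_le_abs (hmargin ω)
    (abs_inner_lt_of_norm_mul_lt (hbound ω) hγ_small)]

/-- There exists a nonzero spurious weight `γ` such that the classifier using
score `⟨w_c, Z_c⟩ + ⟨γ, Z_e⟩` is Bayes optimal (risk = label-noise rate) in every environment
satisfying the margin and boundedness conditions. -/
theorem exists_spurious_bayes_optimal (m o : ℕ) (hm : 0 < m) (ho : 0 < o)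
    (w_c : EuclideanSpace ℝ (Fin m)) (c z_sup : ℝ) (hc : 0 < c) (hz : 0 < z_sup) :
    ∃ γ : EuclideanSpace ℝ (Fin o), γ ≠ 0 ∧
      ∀ (Ω : Type) (_ : MeasurableSpace Ω) (μ : Measure Ω), IsProbabilityMeasure μ →
        ∀ (Z_c : Ω → EuclideanSpace ℝ (Fin m)) (Z_e : Ω → EuclideanSpace ℝ (Fin o))
          (η : Ω → Bool), Measurable Z_c → Measurable Z_e → Measurable η →
          (∀ ω, |⟪w_c, Z_c ω⟫| ≥ c) → (∀ ω, ‖Z_e ω‖ ≤ z_sup) →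
          μ {ω | xor (decide ((0:ℝ) ≤ ⟪w_c, Z_c ω⟫)) (η ω)
                  ≠ decide ((0:ℝ) ≤ ⟪w_c, Z_c ω⟫ + ⟪γ, Z_e ω⟫)}
            = μ {ω | η ω = true} :=
  exists_spurious_bayes_optimal_general m o ho w_c c z_sup hc hz
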